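/- arXiv:2406.07795 — 2 statements merged into one kernel-verified Lean document; each statement's English description precedes it below -/
import Mathlib

section
/- Let r be a positive integer and for 1 ≤ k ≤ r set α_k = 2kπ/(2r+1) and λ_k = −2cos α_k. Define the real vector v_k of dimension r by (v_k)_j = (−1)^{r−j}·(1 + Σ_{i=1}^{r−j} 2cos(i·α_k)) for j = 1, ..., r (so in particular (v_k)_r = 1). Then for each k = 1, ..., r, the vector v_k is an eigenvector of B_1^T cor13responding to the eigenvalue λ_k, i.e. B_1^T v_k = λ_k v_k and v_k ≠ 0. -/
open Matrix Real

/-- The divisor matrix `B₁` over ℝ (0-indexed): `(B₁)_{i,i+1} = (B₁)_{i+1,i} = 1`,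
`(B₁)_{r-1,r-1} = 1`, all other entries `0`. -/
noncomputable def B1 (r : ℕ) : Matrix (Fin r) (Fin r) ℝ :=
  Matrix.of fun i j =>
    if (i : ℕ) + 1 = (j : ℕ) ∨ (j : ℕ) + 1 = (i : ℕ) then 1
    else if (i : ℕ) = r - 1 ∧ (j : ℕ) = r - 1 then 1 else 0

noncomputable def Saux (α : ℝ) (m : ℕ) : ℝ :=
  1 + ∑ i ∈ Finset.Icc 1 m, 2 * Real.cos (i * α)

lemma Saux_key (α : ℝ) (m : ℕ) :
    Real.sin (α / 2) * Saux α m = Real.sin ((2 * m + 1) * (α / 2)) := by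
  induction m with
  | zero => simp [Saux]
  | succ n ih =>
    have hstep : Saux α (n + 1) = Saux α n + 2 * Real.cos (((n : ℝ) + 1) * α) := by
      simp only [Saux]
      rw [Finset.sum_Icc_succ_top (by omega : 1 ≤ n + 1)]
      push_cast; ring
    rw [hstep, mul_add, ih]
    have h1 := Real.sin_add (((n : ℝ) + 1) * α) (α / 2)
    have h2 := Real.sin_sub (((n : ℝ) + 1) * α) (α / 2)
    have e1 : (2 * ((n : ℝ) + 1) + 1) * (α / 2) = ((n : ℝ) + 1) * α + α / 2 := by ring
    have e2 : (2 * (n : ℝ) + 1) * (α / 2) = ((n : ℝ) + 1) * α - α / 2 := by ring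
    push_cast
    rw [e1, e2, h1, h2]
    ring

/-- For `α_k = 2kπ/(2r+1)`, the vector `v_k` with (1-indexed) `j`-th entry
`(−1)^{r−j} (1 + Σ_{i=1}^{r−j} 2 cos(i α_k))` is an eigenvector of `B₁ᵀ` for the
eigenvalue `λ_k = −2 cos α_k`. -/
theorem B1_transpose_eigenvector (r : ℕ) (hr : 0 < r) (k : ℕ) (hk1 : 1 ≤ k) (hkr : k ≤ r)
    (α : ℝ) (hα : α = 2 * k * Real.pi / (2 * r + 1))
    (lam : ℝ) (hlam : lam = -2 * Real.cos α)
    (v : Fin r → ℝ)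
    (hv : ∀ j : Fin r, v j = (-1) ^ (r - 1 - (j : ℕ)) *
      (1 + ∑ i ∈ Finset.Icc 1 (r - 1 - (j : ℕ)), 2 * Real.cos (i * α))) :
    (B1 r)ᵀ *ᵥ v = lam • v ∧ v ≠ 0 := by
  have hπ := Real.pi_pos
  have hvS : ∀ j : Fin r, v j = (-1) ^ (r - 1 - (j : ℕ)) * Saux α (r - 1 - (j : ℕ)) :=
    fun j => hv j
  -- sin (α/2) ≠ 0
  have hk1' : (1 : ℝ) ≤ (k : ℝ) := by exact_mod_cast hk1
  have hkr' : (k : ℝ) ≤ (r : ℝ) := by exact_mod_cast hkr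
  have h2r : (0 : ℝ) < 2 * (r : ℝ) + 1 := by positivity
  have hα2 : α / 2 = (k : ℝ) * Real.pi / (2 * (r : ℝ) + 1) := by rw [hα]; ring
  have hsin : Real.sin (α / 2) ≠ 0 := by
    have h1 : 0 < α / 2 := by
      rw [hα2]; apply div_pos _ h2r; nlinarith
    have h2 : α / 2 < Real.pi := by
      rw [hα2, div_lt_iff₀ h2r]; nlinarith
    exact ne_of_gt (Real.sin_pos_of_pos_of_lt_pi h1 h2)
  -- S r = 0
  have hSr : Saux α r = 0 := by
    have h0 : Real.sin (α / 2) * Saux α r = 0 := by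
      rw [Saux_key]
      have e : (2 * (r : ℝ) + 1) * (α / 2) = (k : ℝ) * Real.pi := by
        rw [hα]; field_simp
      rw [e, Real.sin_nat_mul_pi]
    exact (mul_eq_zero.mp h0).resolve_left hsin
  -- recurrence
  have hrec : ∀ n : ℕ, Saux α (n + 2) + Saux α n = 2 * Real.cos α * Saux α (n + 1) := by
    intro n
    apply mul_left_cancel₀ hsin
    rw [mul_add, Saux_key, Saux_key, show Real.sin (α/2) * (2 * Real.cos α * Saux α (n+1))
      = 2 * Real.cos α * (Real.sin (α/2) * Saux α (n+1)) by ring, Saux_key]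
    have h1 := Real.sin_add ((2 * (n : ℝ) + 3) * (α / 2)) α
    have h2 := Real.sin_sub ((2 * (n : ℝ) + 3) * (α / 2)) α
    have e1 : (2 * ((n : ℝ) + 2) + 1) * (α / 2) = (2 * (n : ℝ) + 3) * (α / 2) + α := by ring
    have e2 : (2 * (n : ℝ) + 1) * (α / 2) = (2 * (n : ℝ) + 3) * (α / 2) - α := by ring
    have e3 : (2 * ((n : ℝ) + 1) + 1) * (α / 2) = (2 * (n : ℝ) + 3) * (α / 2) := by ring
    push_cast
    rw [e1, e2, e3, h1, h2]
    ring
  -- S 1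
  have hS1 : Saux α 1 = 1 + 2 * Real.cos α := by
    simp [Saux]
  -- the mulVec computation
  have hsum : ∀ i : Fin r, ((B1 r)ᵀ *ᵥ v) i =
      (if h : 0 < (i : ℕ) then v ⟨(i : ℕ) - 1, by omega⟩ else 0) +
      (if h : (i : ℕ) + 1 < r then v ⟨(i : ℕ) + 1, h⟩ else 0) +
      (if (i : ℕ) = r - 1 then v i else 0) := by
    intro i
    have hterm : ∀ j : Fin r, (B1 r)ᵀ i j * v j =
        (if (j : ℕ) + 1 = (i : ℕ) then v j else 0) +
        (if (i : ℕ) + 1 = (j : ℕ) then v j else 0) +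
        (if (j : ℕ) = r - 1 ∧ (i : ℕ) = r - 1 then v j else 0) := by
      intro j
      have hj := j.isLt
      have hi := i.isLt
      simp only [Matrix.transpose_apply, B1, Matrix.of_apply]
      split_ifs <;> first | ring1 | (exfalso; omega)
    have : ((B1 r)ᵀ *ᵥ v) i = ∑ j : Fin r, ((if (j : ℕ) + 1 = (i : ℕ) then v j else 0) +
        (if (i : ℕ) + 1 = (j : ℕ) then v j else 0) +
        (if (j : ℕ) = r - 1 ∧ (i : ℕ) = r - 1 then v j else 0)) := by
      rw [Matrix.mulVec, dotProduct]
      exact Finset.sum_congr rfl fun j _ => hterm j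
    rw [this, Finset.sum_add_distrib, Finset.sum_add_distrib]
    congr 1
    · congr 1
      · -- first sum
        split_ifs with h
        · rw [Finset.sum_eq_single (⟨(i : ℕ) - 1, by omega⟩ : Fin r)]
          · rw [if_pos]; simp; omega
          · intro b _ hb
            rw [if_neg]
            intro hc
            exact hb (Fin.ext (by simp; omega))
          · intro h'; exact absurd (Finset.mem_univ _) h'
        · apply Finset.sum_eq_zero
          intro j _
          rw [if_neg]
          omega
      · -- second sum
        split_ifs with h
        · rw [Finset.sum_eq_single (⟨(i : ℕ) + 1, h⟩ : Fin r)]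
          · rw [if_pos]; simp
          · intro b _ hb
            rw [if_neg]
            intro hc
            exact hb (Fin.ext (by simp; omega))
          · intro h'; exact absurd (Finset.mem_univ _) h'
        · apply Finset.sum_eq_zero
          intro j _
          have hj := j.isLt
          rw [if_neg]
          omega
    · -- third sum
      split_ifs with h
      · rw [Finset.sum_eq_single i]
        · rw [if_pos ⟨by omega, h⟩]
        · intro b _ hb
          rw [if_neg]
          intro hc
          have hi := i.isLt
          exact hb (Fin.ext (by omega))
        · intro h'; exact absurd (Finset.mem_univ _) h'
      · apply Finset.sum_eq_zero
        intro j _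
        rw [if_neg]
        tauto
  constructor
  · funext i
    have hi := i.isLt
    rw [hsum i]
    simp only [Pi.smul_apply, smul_eq_mul]
    by_cases h0 : (i : ℕ) = 0 <;> by_cases htop : (i : ℕ) = r - 1
    · -- r = 1
      have hr1 : r = 1 := by omega
      rw [dif_neg (by omega), dif_neg (by omega), if_pos htop, hvS i, hlam]
      have hSr' : Saux α 1 = 0 := by rw [← hr1]; exact hSr
      rw [hS1] at hSr'
      rw [show r - 1 - (i : ℕ) = 0 by omega]
      simp only [pow_zero, one_mul]
      have hS0 : Saux α 0 = 1 := by simp [Saux]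
      rw [hS0]
      linarith
    · -- top row, r ≥ 2
      have hr2 : 2 ≤ r := by omega
      rw [dif_neg (by omega), dif_pos (by omega : (i : ℕ) + 1 < r), if_neg htop,
        hvS, hvS i]
      simp only
      rw [show r - 1 - ((i : ℕ) + 1) = r - 2 by omega, show r - 1 - (i : ℕ) = r - 2 + 1 by omega]
      have h := hrec (r - 2)
      rw [show r - 2 + 2 = r by omega] at h
      have hSr' : Saux α r = 0 := hSr
      rw [hlam]
      linear_combination ((-1 : ℝ)) ^ (r - 2) * h - ((-1 : ℝ)) ^ (r - 2) * hSr'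
    · -- bottom row
      have h1 : 0 < (i : ℕ) := by omega
      rw [dif_pos h1, dif_neg (by omega), if_pos htop, hvS, hvS i]
      simp only
      rw [show r - 1 - ((i : ℕ) - 1) = 1 by omega, show r - 1 - (i : ℕ) = 0 by omega]
      have hS0 : Saux α 0 = 1 := by simp [Saux]
      rw [hlam, hS0]
      linear_combination -hS1
    · -- interior
      have h1 : 0 < (i : ℕ) := by omega
      have h2 : (i : ℕ) + 1 < r := by omega
      rw [dif_pos h1, dif_pos h2, if_neg htop, hvS, hvS, hvS i]
      simp only
      obtain ⟨t, ht⟩ : ∃ t, r - 1 - (i : ℕ) - 1 = t := ⟨_, rfl⟩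
      rw [show r - 1 - ((i : ℕ) - 1) = t + 2 by omega,
        show r - 1 - ((i : ℕ) + 1) = t by omega,
        show r - 1 - (i : ℕ) = t + 1 by omega]
      have h := hrec t
      rw [hlam]
      linear_combination ((-1 : ℝ)) ^ t * h
  · intro h0
    have hlast : v ⟨r - 1, by omega⟩ = 1 := by
      rw [hvS]
      simp [Saux]
    rw [h0] at hlast
    simp at hlast
end

section
/- Let r be a positive integer and let B_2 be the r×r divisor matrix. Then det W(B_2) = 1, where W(B_2) is the walk matrix of B_2. -/
open Matrix

/-- The walk matrix of a square matrix `M`: its `j`-th column (0-indexed)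
is `M ^ j` applied to the all-ones vector. -/
def walkMatrix {m : ℕ} {R : Type*} [CommRing R] (M : Matrix (Fin m) (Fin m) R) :
    Matrix (Fin m) (Fin m) R :=
  Matrix.of fun i j => (M ^ (j : ℕ) *ᵥ fun _ => (1 : R)) i

/-- The divisor matrix `B₂` (0-indexed): `(B₂)_{i,i+1} = 1` for all `i`,
`(B₂)_{i,i-1} = 1` for `1 ≤ i ≤ r-2`, `(B₂)_{r-1,r-2} = 2`, all other entries `0`. -/
def B2 (r : ℕ) : Matrix (Fin r) (Fin r) ℤ :=
  Matrix.of fun i j =>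
    if (i : ℕ) + 1 = (j : ℕ) then 1
    else if (j : ℕ) + 1 = (i : ℕ) then (if (i : ℕ) = r - 1 then 2 else 1)
    else 0

/-- The first standard basis vector. -/
def e0 (r : ℕ) : Fin r → ℤ := fun i => if (i : ℕ) = 0 then 1 else 0

/-- Extension of a vector on `Fin r` to `ℕ` by zero. -/
def extZ (r : ℕ) (x : Fin r → ℤ) (n : ℕ) : ℤ := if h : n < r then x ⟨n, h⟩ else 0

lemma extZ_apply (r : ℕ) (x : Fin r → ℤ) (i : Fin r) : extZ r x (i : ℕ) = x i := by
  rw [extZ, dif_pos i.isLt]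

lemma B2_mulVec (r : ℕ) (x : Fin r → ℤ) (i : Fin r) :
    (B2 r *ᵥ x) i =
      extZ r x ((i : ℕ) + 1) +
      (if (i : ℕ) = r - 1 then 2 else 1) *
        (if 0 < (i : ℕ) then extZ r x ((i : ℕ) - 1) else 0) := by
  classical
  have hsplit : ∀ k : Fin r, B2 r i k * x k =
      (if (i : ℕ) + 1 = (k : ℕ) then x k else 0) +
      (if (i : ℕ) = r - 1 then 2 else 1) * (if ((k : ℕ) + 1 = (i : ℕ)) then x k else 0) := by
    intro k
    simp only [B2, Matrix.of_apply]
    by_cases h1 : (i : ℕ) + 1 = (k : ℕ)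
    · have h2 : ¬ ((k : ℕ) + 1 = (i : ℕ)) := by omega
      simp [h1, h2]
    · by_cases h2 : (k : ℕ) + 1 = (i : ℕ)
      · simp only [if_neg h1, if_pos h2]
        ring
      · simp [h1, h2]
  show ∑ k, B2 r i k * x k = _
  rw [Finset.sum_congr rfl fun k _ => hsplit k, Finset.sum_add_distrib, ← Finset.mul_sum]
  congr 1
  · by_cases h : (i : ℕ) + 1 < r
    · rw [extZ, dif_pos h, Finset.sum_eq_single (⟨(i : ℕ) + 1, h⟩ : Fin r)]
      · simp
      · intro k _ hk
        rw [if_neg]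
        intro hc
        exact hk (Fin.ext hc.symm)
      · simp
    · rw [extZ, dif_neg h, Finset.sum_eq_zero]
      intro k _
      rw [if_neg]
      have := k.isLt
      omega
  · congr 1
    by_cases h : 0 < (i : ℕ)
    · have hlt : (i : ℕ) - 1 < r := lt_of_le_of_lt (Nat.pred_le _) i.isLt
      rw [if_pos h, extZ, dif_pos hlt,
        Finset.sum_eq_single (⟨(i : ℕ) - 1, hlt⟩ : Fin r)]
      · rw [if_pos (show ((⟨(i : ℕ) - 1, hlt⟩ : Fin r) : ℕ) + 1 = (i : ℕ)
          from by show (i : ℕ) - 1 + 1 = (i : ℕ); omega)]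
      · intro k _ hk
        rw [if_neg]
        intro hc
        exact hk (Fin.ext (show (k : ℕ) = (i : ℕ) - 1 by omega))
      · simp
    · rw [if_neg h, Finset.sum_eq_zero]
      intro k _
      rw [if_neg]
      omega

lemma pow_e0_eq_zero (r : ℕ) : ∀ (k m : ℕ), k < m →
    extZ r ((B2 r ^ k) *ᵥ e0 r) m = 0 := by
  intro k
  induction k with
  | zero =>
    intro m hm
    rw [extZ]
    split
    · simp only [pow_zero, Matrix.one_mulVec, e0]
      rw [if_neg (show ¬ ((⟨m, ‹m < r›⟩ : Fin r) : ℕ) = 0 from by show ¬ (m = 0); omega)]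
    · rfl
  | succ k ih =>
    intro m hm
    rw [extZ]
    split
    · rename_i h
      rw [pow_succ', ← Matrix.mulVec_mulVec, B2_mulVec]
      have hv : ((⟨m, h⟩ : Fin r) : ℕ) = m := rfl
      rw [hv, ih (m + 1) (by omega)]
      by_cases hp : 0 < m
      · rw [if_pos hp, ih (m - 1) (by omega), mul_zero, add_zero]
      · rw [if_neg hp, mul_zero, add_zero]
    · rfl

lemma pow_e0_diag (r : ℕ) : ∀ (k : ℕ), k + 1 < r →
    extZ r ((B2 r ^ k) *ᵥ e0 r) k = 1 := by
  intro k
  induction k with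
  | zero =>
    intro h
    rw [extZ, dif_pos (by omega)]
    simp [e0, Matrix.one_mulVec]
  | succ k ih =>
    intro h
    rw [extZ, dif_pos (by omega : k + 1 < r), pow_succ', ← Matrix.mulVec_mulVec, B2_mulVec]
    have hv : ((⟨k + 1, by omega⟩ : Fin r) : ℕ) = k + 1 := rfl
    rw [hv, pow_e0_eq_zero r k (k + 1 + 1) (by omega), zero_add,
      if_neg (show ¬ (k + 1 = r - 1) by omega), if_pos (by omega), one_mul,
      Nat.add_sub_cancel, ih (by omega)]

lemma B2_mulVec_one (r : ℕ) (hr : 2 ≤ r) (i : Fin r) :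
    (B2 r *ᵥ fun _ => (1 : ℤ)) i = 2 - e0 r i := by
  rw [B2_mulVec]
  have hi := i.isLt
  simp only [e0]
  have hext : ∀ n, n < r → extZ r (fun _ => (1 : ℤ)) n = 1 := fun n hn => by
    rw [extZ, dif_pos hn]
  by_cases h0 : (i : ℕ) = 0
  · rw [if_pos h0, if_neg (show ¬ 0 < (i : ℕ) by omega),
      if_neg (show ¬ (i : ℕ) = r - 1 by omega), mul_zero, add_zero,
      hext _ (by omega)]
    ring
  · rw [if_neg h0, if_pos (show 0 < (i : ℕ) by omega), hext ((i : ℕ) - 1) (by omega)]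
    by_cases hl : (i : ℕ) = r - 1
    · rw [if_pos hl, extZ, dif_neg (by omega)]
      ring
    · rw [if_neg hl, hext _ (by omega)]
      ring

/-- The column-operation matrix. -/
def Tm (r : ℕ) : Matrix (Fin r) (Fin r) ℤ :=
  Matrix.of fun i j =>
    if i = j then (if (j : ℕ) = 0 then 1 else -1)
    else if (i : ℕ) + 1 = (j : ℕ) then 2 else 0

/-- The target matrix: first column all ones, column `j ≥ 1` is `B₂^(j-1) e₀`. -/
def Am (r : ℕ) : Matrix (Fin r) (Fin r) ℤ :=
  Matrix.of fun i j => if (j : ℕ) = 0 then 1 else ((B2 r ^ ((j : ℕ) - 1)) *ᵥ e0 r) i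

lemma det_Tm (r : ℕ) (hr : 0 < r) : (Tm r).det = (-1) ^ (r - 1) := by
  classical
  rw [Matrix.det_of_upperTriangular (M := Tm r) ?ht]
  · have hd : ∀ i : Fin r, Tm r i i = (-1) * (if (i : ℕ) = 0 then -1 else 1) := by
      intro i
      simp only [Tm, Matrix.of_apply, if_pos rfl]
      split_ifs <;> ring
    rw [Finset.prod_congr rfl fun i _ => hd i, Finset.prod_mul_distrib,
      Finset.prod_const]
    have h1 : ∏ i : Fin r, (if (i : ℕ) = 0 then (-1 : ℤ) else 1) = -1 := by
      rw [Finset.prod_eq_single (⟨0, hr⟩ : Fin r)]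
      · simp
      · intro k _ hk
        rw [if_neg (by intro hc; exact hk (Fin.ext hc))]
      · simp
    rw [h1, Finset.card_univ, Fintype.card_fin]
    obtain ⟨n, rfl⟩ : ∃ n, r = n + 1 := ⟨r - 1, by omega⟩
    simp [pow_succ]
  · intro i j hij
    have hji : (j : ℕ) < (i : ℕ) := hij
    simp only [Tm, Matrix.of_apply]
    rw [if_neg (by intro hc; subst hc; omega), if_neg (by omega)]

lemma W_mul_T (r : ℕ) (hr : 2 ≤ r) : walkMatrix (B2 r) * Tm r = Am r := by
  classical
  ext i j
  rw [Matrix.mul_apply]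
  by_cases hj : (j : ℕ) = 0
  · rw [Finset.sum_eq_single j]
    · simp [Tm, hj, walkMatrix, Am, Matrix.one_mulVec]
    · intro k _ hk
      simp only [Tm, Matrix.of_apply]
      rw [if_neg hk, if_neg (by omega), mul_zero]
    · simp
  · have hjlt := j.isLt
    have hsplit : ∀ k : Fin r, walkMatrix (B2 r) i k * Tm r k j =
        (if k = j then walkMatrix (B2 r) i j * (-1) else 0) +
        (if k = ⟨(j : ℕ) - 1, by omega⟩ then
          walkMatrix (B2 r) i ⟨(j : ℕ) - 1, by omega⟩ * 2 else 0) := by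
      intro k
      by_cases h1 : k = j
      · subst h1
        rw [if_pos rfl, if_neg (by
          intro hc
          have hc' : (k : ℕ) = (k : ℕ) - 1 := congrArg Fin.val hc
          omega)]
        simp [Tm, hj]
      · rw [if_neg h1]
        by_cases h2 : k = ⟨(j : ℕ) - 1, by omega⟩
        · subst h2
          rw [if_pos rfl]
          simp only [Tm, Matrix.of_apply]
          rw [if_neg h1, if_pos (show ((⟨(j : ℕ) - 1, by omega⟩ : Fin r) : ℕ) + 1 = (j : ℕ)
            from by show (j : ℕ) - 1 + 1 = (j : ℕ); omega)]
          ring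
        · rw [if_neg h2]
          simp only [Tm, Matrix.of_apply]
          rw [if_neg h1, if_neg (by
            intro hc
            exact h2 (Fin.ext (show (k : ℕ) = (j : ℕ) - 1 by omega)))]
          ring
    rw [Finset.sum_congr rfl fun k _ => hsplit k, Finset.sum_add_distrib,
      Finset.sum_ite_eq' Finset.univ j, Finset.sum_ite_eq' Finset.univ]
    simp only [Finset.mem_univ, if_pos]
    have key : ∀ i : Fin r,
        ((B2 r ^ ((j : ℕ) - 1)) *ᵥ e0 r) i =
        2 * ((B2 r ^ ((j : ℕ) - 1)) *ᵥ fun _ => (1 : ℤ)) i -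
          ((B2 r ^ (j : ℕ)) *ᵥ fun _ => (1 : ℤ)) i := by
      intro i
      have hpow : (B2 r : Matrix (Fin r) (Fin r) ℤ) ^ (j : ℕ) =
          B2 r ^ ((j : ℕ) - 1) * B2 r := by
        rw [← pow_succ]
        congr 1
        omega
      rw [hpow, ← Matrix.mulVec_mulVec]
      have hbv : (B2 r *ᵥ fun _ => (1 : ℤ)) = fun i => 2 - e0 r i := by
        funext i; exact B2_mulVec_one r hr i
      rw [hbv]
      have hsub : (fun i => 2 - e0 r i) = (fun _ => (2 : ℤ)) - e0 r := rfl
      rw [hsub, Matrix.mulVec_sub]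
      have h2 : ((fun _ => (2 : ℤ)) : Fin r → ℤ) = (2 : ℤ) • fun _ => (1 : ℤ) := by
        funext; simp
      rw [h2, Matrix.mulVec_smul]
      simp [Pi.sub_apply, smul_eq_mul]
      try ring
    simp only [walkMatrix, Matrix.of_apply, Am]
    rw [if_neg hj, key i]
    ring

lemma det_Am (r : ℕ) (hr : 2 ≤ r) : (Am r).det = (-1) ^ (r - 1) := by
  classical
  obtain ⟨n, rfl⟩ : ∃ n, r = n + 1 := ⟨r - 1, by omega⟩
  have hn1 : 1 ≤ n := by omega
  have hperm : ((Am (n + 1)).submatrix id (finRotate (n + 1))).det =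
      (Equiv.Perm.sign (finRotate (n + 1)) : ℤ) * (Am (n + 1)).det :=
    Matrix.det_permute' _ _
  have htri : ((Am (n + 1)).submatrix id (finRotate (n + 1))).det = 1 := by
    rw [Matrix.det_of_upperTriangular ?ht]
    · apply Finset.prod_eq_one
      intro i _
      simp only [Matrix.submatrix_apply, id_eq, finRotate_succ_apply, Am, Matrix.of_apply]
      by_cases hl : (i : ℕ) = n
      · have hle : i = Fin.last n := Fin.ext (by simpa using hl)
        rw [hle, Fin.last_add_one]
        simp
      · have hv : ((i + 1 : Fin (n + 1)) : ℕ) = (i : ℕ) + 1 :=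
          Fin.val_add_one_of_lt (by
            rw [Fin.lt_iff_val_lt_val, Fin.val_last]
            have := i.isLt
            omega)
        rw [hv, if_neg (by omega)]
        simp only [Nat.add_sub_cancel]
        have := pow_e0_diag (n + 1) (i : ℕ) (by have := i.isLt; omega)
        rwa [extZ_apply] at this
    · intro i j hij
      have hji : (j : ℕ) < (i : ℕ) := hij
      simp only [Matrix.submatrix_apply, id_eq, finRotate_succ_apply, Am, Matrix.of_apply]
      have hjn : (j : ℕ) < n := by have := i.isLt; omega
      have hv : ((j + 1 : Fin (n + 1)) : ℕ) = (j : ℕ) + 1 :=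
        Fin.val_add_one_of_lt (by
          rw [Fin.lt_iff_val_lt_val, Fin.val_last]
          omega)
      rw [hv, if_neg (by omega)]
      simp only [Nat.add_sub_cancel]
      have := pow_e0_eq_zero (n + 1) (j : ℕ) (i : ℕ) (by omega)
      rwa [extZ_apply] at this
  rw [htri, sign_finRotate] at hperm
  have hperm' : (1 : ℤ) = (-1) ^ n * (Am (n + 1)).det := by
    simpa using hperm
  have hsq : ((-1 : ℤ)) ^ n * (-1) ^ n = 1 := by
    rw [← pow_add]
    exact Even.neg_one_pow ⟨n, rfl⟩
  have hc : ((-1 : ℤ)) ^ n * ((-1) ^ n * (Am (n + 1)).det) = (-1) ^ n * 1 := by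
    rw [← hperm', mul_one]
  rw [← mul_assoc, hsq, one_mul, mul_one] at hc
  simpa [Nat.add_sub_cancel] using hc

/-- The determinant of the walk matrix of `B₂` is `1`. -/
theorem det_walkMatrix_B2 (r : ℕ) (hr : 0 < r) : (walkMatrix (B2 r)).det = 1 := by
  rcases eq_or_lt_of_le (show 1 ≤ r from hr) with h1 | h2
  · have hr1 : r = 1 := h1.symm
    subst hr1
    rw [Matrix.det_fin_one]
    simp [walkMatrix, Matrix.one_mulVec]
  · have hr2 : 2 ≤ r := h2
    have h := congrArg Matrix.det (W_mul_T r hr2)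
    rw [Matrix.det_mul, det_Tm r (by omega), det_Am r hr2] at h
    have hne : ((-1 : ℤ)) ^ (r - 1) ≠ 0 := pow_ne_zero _ (by norm_num)
    have h2' : (walkMatrix (B2 r)).det * (-1) ^ (r - 1) = 1 * (-1) ^ (r - 1) := by
      rw [h, one_mul]
    exact mul_right_cancel₀ hne h2'
end
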